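/- arXiv:2012.14986 — 3 statements merged into one kernel-verified Lean document; each statement's English description precedes it below -/
import Mathlib

section
/- Fix an odd orthogonal ideal array x of size n bounded by m, and set P_i := c_{n,n+1−i}(x) − c_{n,1}(x) for i ∈ {1,…,n}, so P_1 ≥ … ≥ P_n = 0. A GT n-triangle framed by P is an array of nonnegative integers (g_{i,j})_{1≤j≤i≤n} with g_{n,j} = P_{n+1−j} for all j ∈ {1,…,n} and g_{i+1,j} ≤ g_{i,j} ≤ g_{i+1,j+1} for all 1 ≤ j ≤ i ≤ n−1. Then the map y ↦ (c_{i,j}(y) − c_{n,1}(x))_{1≤j≤i≤n} is a bijection from the set {y : y is an odd orthogonal ideal array of size n bounded by m with c_{n,j}(y) = c_{n,j}(x) for all j ∈ {1,…,n}} onto the set of GT n-triangles framed by P, and this bijection is an order isomorphism for the componentwise partial orders on both sides. -/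
open Finset
open scoped Classical

/-- An odd orthogonal ideal array of size `n` bounded by `m`: nonnegative
integers `c i j` for `1 ≤ j ≤ i ≤ n` with `c n n ≤ m` and
`c (i+1) j ≤ c i j ≤ c (i+1) (j+1)`; values outside the valid index range are
normalized to `0`. -/
def IsOddArr (n m : ℕ) (c : ℕ → ℕ → ℕ) : Prop :=
  c n n ≤ m ∧
  (∀ i j, 1 ≤ j → j ≤ i → i < n → c (i + 1) j ≤ c i j ∧ c i j ≤ c (i + 1) (j + 1)) ∧
  (∀ i j, ¬(1 ≤ j ∧ j ≤ i ∧ i ≤ n) → c i j = 0)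

/-- A GT `n`-triangle framed by a partition `P = (P_1,…,P_n)`: nonnegative
integers `g i j` for `1 ≤ j ≤ i ≤ n` with `g n j = P_{n+1-j}` and
`g (i+1) j ≤ g i j ≤ g (i+1) (j+1)`; values outside the valid index range are
normalized to `0`. -/
def IsTri (n : ℕ) (P : ℕ → ℤ) (g : ℕ → ℕ → ℤ) : Prop :=
  (∀ i j, 1 ≤ j → j ≤ i → i ≤ n → 0 ≤ g i j) ∧
  (∀ j, 1 ≤ j → j ≤ n → g n j = P (n + 1 - j)) ∧
  (∀ i j, 1 ≤ j → j ≤ i → i < n → g (i + 1) j ≤ g i j ∧ g i j ≤ g (i + 1) (j + 1)) ∧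
  (∀ i j, ¬(1 ≤ j ∧ j ≤ i ∧ i ≤ n) → g i j = 0)

/-- The translation `y ↦ (c_{i,j}(y) − base)` on the valid positions. -/
def tmap (n : ℕ) (base : ℕ) (y : ℕ → ℕ → ℕ) : ℕ → ℕ → ℤ := fun i j =>
  if 1 ≤ j ∧ j ≤ i ∧ i ≤ n then (y i j : ℤ) - base else 0

/-- Consecutive entries of row `n` are weakly increasing. -/
lemma rowstep {n m : ℕ} (hn : 3 ≤ n) {y : ℕ → ℕ → ℕ} (hy : IsOddArr n m y) :
    ∀ j, 1 ≤ j → j < n → y n j ≤ y n (j + 1) := by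
  intro j hj hjn
  obtain ⟨h1, h2⟩ := hy.2.1 (n - 1) j hj (by omega) (by omega)
  have hnn : n - 1 + 1 = n := by omega
  rw [hnn] at h1 h2
  omega

/-- Row `n` is weakly increasing. -/
lemma rowmono {n m : ℕ} (hn : 3 ≤ n) {y : ℕ → ℕ → ℕ} (hy : IsOddArr n m y) :
    ∀ k, k ≤ n → ∀ j, 1 ≤ j → j ≤ k → y n j ≤ y n k := by
  intro k
  induction k with
  | zero => intro _ j hj hjk; omega
  | succ k ih =>
    intro hk j hj hjk
    rcases Nat.eq_or_lt_of_le hjk with h | h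
    · rw [h]
    · exact le_trans (ih (by omega) j hj (by omega)) (rowstep hn hy k (by omega) (by omega))

/-- Entries dominate the entry below them in the same column, down to row `n`. -/
lemma colmono {n m : ℕ} {y : ℕ → ℕ → ℕ} (hy : IsOddArr n m y) :
    ∀ d i j, i + d = n → 1 ≤ j → j ≤ i → y n j ≤ y i j := by
  intro d
  induction d with
  | zero =>
    intro i j h _ _
    have : i = n := by omega
    subst this; exact le_rfl
  | succ d ih =>
    intro i j h hj hji
    have h1 := (hy.2.1 i j hj hji (by omega)).1
    exact le_trans (ih (i + 1) j (by omega) hj (by omega)) h1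

/-- Fixing an odd orthogonal ideal array `x` of size `n`
bounded by `m` and setting `P_i := c_{n,n+1−i}(x) − c_{n,1}(x)`, the partition
`P` is weakly decreasing with `P_n = 0`, and the translation
`y ↦ (c_{i,j}(y) − c_{n,1}(x))` is an order isomorphism from the set of odd
orthogonal ideal arrays agreeing with `x` on row `n` onto the set of GT
`n`-triangles framed by `P`. -/
theorem odd_orthogonal_component_is_GT_lattice
    (n m : ℕ) (hn : 3 ≤ n) (hm : 1 ≤ m)
    (x : ℕ → ℕ → ℕ) (hx : IsOddArr n m x) :
    (∀ i, 1 ≤ i → i < n →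
      ((x n (n + 1 - (i + 1)) : ℤ) - x n 1) ≤ ((x n (n + 1 - i) : ℤ) - x n 1)) ∧
    ((x n (n + 1 - n) : ℤ) - x n 1) = 0 ∧
    Set.BijOn (tmap n (x n 1))
      {y : ℕ → ℕ → ℕ | IsOddArr n m y ∧ ∀ j, 1 ≤ j → j ≤ n → y n j = x n j}
      {g : ℕ → ℕ → ℤ | IsTri n (fun i => (x n (n + 1 - i) : ℤ) - x n 1) g} ∧
    (∀ y y' : ℕ → ℕ → ℕ,
      (IsOddArr n m y ∧ ∀ j, 1 ≤ j → j ≤ n → y n j = x n j) →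
      (IsOddArr n m y' ∧ ∀ j, 1 ≤ j → j ≤ n → y' n j = x n j) →
      ((∀ i j, 1 ≤ j → j ≤ i → i ≤ n → y i j ≤ y' i j) ↔
        (∀ i j, 1 ≤ j → j ≤ i → i ≤ n →
          tmap n (x n 1) y i j ≤ tmap n (x n 1) y' i j))) := by
  have tm : ∀ (y : ℕ → ℕ → ℕ) (i j : ℕ), (1 ≤ j ∧ j ≤ i ∧ i ≤ n) →
      tmap n (x n 1) y i j = (y i j : ℤ) - x n 1 := fun y i j h => if_pos h
  have base : ∀ y : ℕ → ℕ → ℕ, IsOddArr n m y →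
      (∀ j, 1 ≤ j → j ≤ n → y n j = x n j) →
      ∀ i j, 1 ≤ j → j ≤ i → i ≤ n → x n 1 ≤ y i j := by
    intro y hy hrow i j hj hji hin
    have h1 : y n 1 = x n 1 := hrow 1 le_rfl (by omega)
    have h2 : y n 1 ≤ y n j := rowmono hn hy j (by omega) 1 le_rfl hj
    have h3 : y n j ≤ y i j := colmono hy (n - i) i j (by omega) hj hji
    omega
  refine ⟨?_, ?_, ⟨?_, ?_, ?_⟩, ?_⟩
  · -- P weakly decreasing
    intro i hi hin
    have e1 : n + 1 - (i + 1) = n - i := by omega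
    have e2 : n + 1 - i = n - i + 1 := by omega
    rw [e1, e2]
    have := rowstep hn hx (n - i) (by omega) (by omega)
    omega
  · -- P n = 0
    have e : n + 1 - n = 1 := by omega
    rw [e]; ring
  · -- MapsTo
    intro y hy
    obtain ⟨hy1, hrow⟩ := hy
    refine ⟨?_, ?_, ?_, ?_⟩
    · intro i j hj hji hin
      rw [tm y i j ⟨hj, hji, hin⟩]
      have := base y hy1 hrow i j hj hji hin
      omega
    · intro j hj hjn
      rw [tm y n j ⟨hj, hjn, le_rfl⟩]
      have e : n + 1 - (n + 1 - j) = j := by omega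
      simp only [e]
      rw [hrow j hj hjn]
    · intro i j hj hji hin
      rw [tm y i j ⟨hj, hji, by omega⟩, tm y (i + 1) j ⟨hj, by omega, by omega⟩,
        tm y (i + 1) (j + 1) ⟨by omega, by omega, by omega⟩]
      obtain ⟨h1, h2⟩ := hy1.2.1 i j hj hji hin
      constructor <;> omega
    · intro i j h
      exact if_neg h
  · -- InjOn
    intro y hy y' hy' heq
    funext i j
    by_cases h : 1 ≤ j ∧ j ≤ i ∧ i ≤ n
    · have := congrFun (congrFun heq i) j
      rw [tm y i j h, tm y' i j h] at this
      omega
    · rw [hy.1.2.2 i j h, hy'.1.2.2 i j h]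
  · -- SurjOn
    intro g hg
    obtain ⟨hg0, hgrow, hgineq, hgz⟩ := hg
    set y : ℕ → ℕ → ℕ :=
      fun i j => if 1 ≤ j ∧ j ≤ i ∧ i ≤ n then (g i j + x n 1).toNat else 0 with hydef
    have yval : ∀ i j, 1 ≤ j → j ≤ i → i ≤ n → (y i j : ℤ) = g i j + x n 1 := by
      intro i j hj hji hin
      have hnn : (0 : ℤ) ≤ g i j + x n 1 :=
        add_nonneg (hg0 i j hj hji hin) (Int.natCast_nonneg _)
      simp only [hydef, if_pos (show 1 ≤ j ∧ j ≤ i ∧ i ≤ n from ⟨hj, hji, hin⟩)]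
      exact Int.toNat_of_nonneg hnn
    have hrow : ∀ j, 1 ≤ j → j ≤ n → y n j = x n j := by
      intro j hj hjn
      have h1 := yval n j hj hjn le_rfl
      have h2 := hgrow j hj hjn
      have e : n + 1 - (n + 1 - j) = j := by omega
      simp only [e] at h2
      omega
    have hyodd : IsOddArr n m y := by
      refine ⟨?_, ?_, ?_⟩
      · have := hrow n (by omega) le_rfl
        have := hx.1
        omega
      · intro i j hj hji hin
        have v1 := yval i j hj hji (by omega)
        have v2 := yval (i + 1) j hj (by omega) (by omega)
        have v3 := yval (i + 1) (j + 1) (by omega) (by omega) (by omega)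
        obtain ⟨h1, h2⟩ := hgineq i j hj hji hin
        constructor <;> omega
      · intro i j h
        simp only [hydef]
        rw [if_neg h]
    refine ⟨y, ⟨hyodd, hrow⟩, ?_⟩
    funext i j
    by_cases h : 1 ≤ j ∧ j ≤ i ∧ i ≤ n
    · rw [tm y i j h]
      have := yval i j h.1 h.2.1 h.2.2
      omega
    · rw [(hgz i j h)]
      exact if_neg h
  · -- order iso
    intro y y' hy hy'
    constructor
    · intro h i j hj hji hin
      rw [tm y i j ⟨hj, hji, hin⟩, tm y' i j ⟨hj, hji, hin⟩]
      have := h i j hj hji hin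
      omega
    · intro h i j hj hji hin
      have := h i j hj hji hin
      rw [tm y i j ⟨hj, hji, hin⟩, tm y' i j ⟨hj, hji, hin⟩] at this
      omega
end

section
/- Let T be a semistandard n-tableau of shape P/Q and let g(T) be the associated GT n-parallelogram, given by g(T)_{i,j} := Q_{i+1−j} + #{c : (i+1−j, c) is a cell of P/Q and T(i+1−j, c) ≤ i}. Let w be the reverse reading word of T: the list of entries obtained by traversing the rows r = 1, 2, …, m in order and, within each row, traversing the cells from the rightmost column to the leftmost column. Then the following are equivalent: (a) for every initial segment of w and every i ∈ {1,…,n−1}, the initial segment contains at least as many entries equal to i as entries equal to i+1; (b) d(g(T); k, p) ≥ 0 for every k ∈ {1,…,n−1} and every p ∈ {0,…,m−1}. -/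
open Finset
open scoped Classical

def ShapeHyps (m n : ℕ) (P Q : ℕ → ℤ) : Prop :=
  2 ≤ n ∧ n ≤ m ∧
  (∀ r, 1 ≤ r → r < m → P (r + 1) ≤ P r) ∧ 0 ≤ P m ∧
  (∀ r, 1 ≤ r → r < m → Q (r + 1) ≤ Q r) ∧ 0 ≤ Q m ∧
  (∀ r, 1 ≤ r → r ≤ m → Q r ≤ P r) ∧
  (∀ c : ℤ, ((Finset.Icc 1 m).filter (fun r => Q r < c ∧ c ≤ P r)).card ≤ n)

/-- The finite set of cells of the skew shape `P/Q`: pairs `(r,c)` with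
`1 ≤ r ≤ m` and `Q_r < c ≤ P_r`. -/
noncomputable def cells (m : ℕ) (P Q : ℕ → ℤ) : Finset (ℕ × ℤ) :=
  (Finset.Icc 1 m ×ˢ Finset.Icc 1 (P 1)).filter fun x => Q x.1 < x.2 ∧ x.2 ≤ P x.1

/-- A semistandard `n`-tableau of skew shape `P/Q`: entries in `{1,…,n}`, rows
weakly increasing, columns strictly increasing; values outside the cells of the
shape are normalized to `0`. -/
def IsSSYT (m n : ℕ) (P Q : ℕ → ℤ) (T : ℕ × ℤ → ℕ) : Prop :=
  (∀ x ∈ cells m P Q, 1 ≤ T x ∧ T x ≤ n) ∧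
  (∀ (r : ℕ) (c : ℤ), (r, c) ∈ cells m P Q → (r, c + 1) ∈ cells m P Q →
    T (r, c) ≤ T (r, c + 1)) ∧
  (∀ (r : ℕ) (c : ℤ), (r, c) ∈ cells m P Q → (r + 1, c) ∈ cells m P Q →
    T (r, c) < T (r + 1, c)) ∧
  (∀ x, x ∉ cells m P Q → T x = 0)

/-- `#_i(T)`: the number of cells of `T` with entry `i`. -/
noncomputable def entryCount (m : ℕ) (P Q : ℕ → ℤ) (T : ℕ × ℤ → ℕ) (i : ℕ) : ℕ :=
  ((cells m P Q).filter fun x => T x = i).card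

/-- The skew Schur polynomial `s_{P/Q}(x_1,…,x_n)`, with the variable `x_{i+1}`
encoded as `MvPolynomial.X (i : Fin n)`. -/
noncomputable def skewSchur (m n : ℕ) (P Q : ℕ → ℤ) : MvPolynomial (Fin n) ℤ :=
  ∑ᶠ T ∈ {T : ℕ × ℤ → ℕ | IsSSYT m n P Q T},
    ∏ i : Fin n, MvPolynomial.X i ^ entryCount m P Q T ((i : ℕ) + 1)

/-- The GT `n`-parallelogram associated to a tableau `T` (slot coordinates). -/
noncomputable def gOf (m n : ℕ) (P Q : ℕ → ℤ) (T : ℕ × ℤ → ℕ) : ℕ → ℕ → ℤ := fun i κ =>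
  if i ≤ n ∧ κ < m then
    Q (κ + 1) + ((cells m P Q).filter fun x => x.1 = κ + 1 ∧ T x ≤ i).card
  else 0

/-- The statistic `d(z;k,p)` (here `z k q` is the entry `g_{k,k-q}`). -/
def dstat (z : ℕ → ℕ → ℤ) (k p : ℕ) : ℤ :=
  (∑ q ∈ Finset.range p, (2 * z k q - z (k - 1) q - z (k + 1) q)) + z k p - z (k + 1) p

/-!
Write `C_r(j)` for the number of entries `j` in the rows above row `r`. The second differences
of `g(T)` in its first index are counts of single entries in a row, so `d(g(T); k, p)`
telescopes to `C_{p+1}(k) - C_{p+2}(k+1)`. An initial segment of the reverse reading word that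
ends in row `r` contains between `C_r(j)` and `C_{r+1}(j)` entries `j`; since rows weakly
increase, cutting row `r` just left of its first entry `> k` attains `C_{r+1}(k+1)` and
`C_r(k)` at once. Hence the ballot condition says exactly `C_{r+1}(k+1) ≤ C_r(k)` for all `r`.
-/

noncomputable def rowCount (m : ℕ) (P Q : ℕ → ℤ) (T : ℕ × ℤ → ℕ) (r j : ℕ) : ℕ :=
  ((cells m P Q).filter fun x => x.1 = r ∧ T x = j).card

noncomputable def rowCountLE (m : ℕ) (P Q : ℕ → ℤ) (T : ℕ × ℤ → ℕ) (r j : ℕ) : ℕ :=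
  ((cells m P Q).filter fun x => x.1 = r ∧ T x ≤ j).card

noncomputable def countBeforeRow (m : ℕ) (P Q : ℕ → ℤ) (T : ℕ × ℤ → ℕ) (r j : ℕ) : ℕ :=
  ((cells m P Q).filter fun x => x.1 < r ∧ T x = j).card

/-- The number of entries `j` in the initial segment of the reverse reading word that ends
at cell `(r, c)`. -/
noncomputable def prefixCount (m : ℕ) (P Q : ℕ → ℤ) (T : ℕ × ℤ → ℕ) (r : ℕ) (c : ℤ)
    (j : ℕ) : ℕ :=
  ((cells m P Q).filter fun x => (x.1 < r ∨ (x.1 = r ∧ c ≤ x.2)) ∧ T x = j).card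

section

variable {m n : ℕ} {P Q : ℕ → ℤ} {T : ℕ × ℤ → ℕ}

lemma mem_cells_of_mem_of_mem {r : ℕ} {c c' d : ℤ} (hc : (r, c) ∈ cells m P Q)
    (hc' : (r, c') ∈ cells m P Q) (hcd : c ≤ d) (hdc : d ≤ c') : (r, d) ∈ cells m P Q := by
  simp only [cells, mem_filter, mem_product, mem_Icc] at hc hc' ⊢
  omega

theorem IsSSYT.row_mono (hT : IsSSYT m n P Q T) {r : ℕ} {c c' : ℤ}
    (hc : (r, c) ∈ cells m P Q) (hc' : (r, c') ∈ cells m P Q) (hle : c ≤ c') :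
    T (r, c) ≤ T (r, c') := by
  induction c', hle using Int.leInduction with
  | base => rfl
  | succ d hcd ih =>
    have hd : (r, d) ∈ cells m P Q := mem_cells_of_mem_of_mem hc hc' hcd (by omega)
    exact (ih hd).trans (hT.2.1 r d hd hc')

lemma rowCountLE_succ (r j : ℕ) :
    rowCountLE m P Q T r (j + 1) = rowCountLE m P Q T r j + rowCount m P Q T r (j + 1) := by
  rw [rowCountLE, rowCountLE, rowCount,
    ← card_union_of_disjoint (disjoint_filter.2 fun x _ h h' => by omega), ← filter_or]
  exact congrArg card (filter_congr fun x _ => by omega)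

lemma countBeforeRow_succ (r j : ℕ) :
    countBeforeRow m P Q T (r + 1) j = countBeforeRow m P Q T r j + rowCount m P Q T r j := by
  rw [countBeforeRow, countBeforeRow, rowCount,
    ← card_union_of_disjoint (disjoint_filter.2 fun x _ h h' => by omega), ← filter_or]
  exact congrArg card (filter_congr fun x _ => by omega)

lemma countBeforeRow_one (j : ℕ) : countBeforeRow m P Q T 1 j = 0 := by
  refine card_eq_zero.2 (filter_eq_empty_iff.2 fun x hx h => ?_)
  simp only [cells, mem_filter, mem_product, mem_Icc] at hx
  omega

lemma countBeforeRow_succ_eq_sum (p j : ℕ) :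
    countBeforeRow m P Q T (p + 1) j = ∑ q ∈ range p, rowCount m P Q T (q + 1) j := by
  induction p with
  | zero => exact countBeforeRow_one j
  | succ p ih => rw [countBeforeRow_succ, ih, sum_range_succ]

lemma countBeforeRow_mono (j : ℕ) : Monotone fun r => countBeforeRow m P Q T r j :=
  fun _ _ hrr' => card_le_card (monotone_filter_right _ fun _ _ h => ⟨h.1.trans_le hrr', h.2⟩)

lemma countBeforeRow_of_lt {r : ℕ} (hr : m < r) (j : ℕ) :
    countBeforeRow m P Q T r j = countBeforeRow m P Q T (m + 1) j := by
  refine congrArg card (filter_congr fun x hx => ?_)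
  simp only [cells, mem_filter, mem_product, mem_Icc] at hx
  omega

lemma gOf_eq {k q : ℕ} (hk : k ≤ n) (hq : q < m) :
    gOf m n P Q T k q = Q (q + 1) + rowCountLE m P Q T (q + 1) k :=
  if_pos ⟨hk, hq⟩

lemma two_mul_gOf_sub_sub {k q : ℕ} (hk1 : 1 ≤ k) (hkn : k < n) (hq : q < m) :
    2 * gOf m n P Q T k q - gOf m n P Q T (k - 1) q - gOf m n P Q T (k + 1) q
      = rowCount m P Q T (q + 1) k - rowCount m P Q T (q + 1) (k + 1) := by
  obtain ⟨k, rfl⟩ : ∃ k', k = k' + 1 := ⟨k - 1, by omega⟩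
  rw [gOf_eq (by omega) hq, gOf_eq (by omega) hq, gOf_eq (by omega) hq, Nat.add_sub_cancel,
    rowCountLE_succ (q + 1) (k + 1), rowCountLE_succ (q + 1) k]
  push_cast
  ring

lemma dstat_gOf {k p : ℕ} (hk1 : 1 ≤ k) (hkn : k < n) (hp : p < m) :
    dstat (gOf m n P Q T) k p
      = countBeforeRow m P Q T (p + 1) k - countBeforeRow m P Q T (p + 2) (k + 1) := by
  rw [dstat, sum_congr rfl fun q hq => two_mul_gOf_sub_sub hk1 hkn ((mem_range.1 hq).trans hp),
    sum_sub_distrib, gOf_eq hkn.le hp, gOf_eq hkn hp, rowCountLE_succ,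
    countBeforeRow_succ (p + 1), countBeforeRow_succ_eq_sum, countBeforeRow_succ_eq_sum]
  push_cast
  ring

lemma countBeforeRow_le_prefixCount (r : ℕ) (c : ℤ) (j : ℕ) :
    countBeforeRow m P Q T r j ≤ prefixCount m P Q T r c j :=
  card_le_card (monotone_filter_right _ fun _ _ h => ⟨Or.inl h.1, h.2⟩)

lemma prefixCount_le_countBeforeRow_succ (r : ℕ) (c : ℤ) (j : ℕ) :
    prefixCount m P Q T r c j ≤ countBeforeRow m P Q T (r + 1) j :=
  card_le_card (monotone_filter_right _ fun _ _ h => ⟨by omega, h.2⟩)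

theorem IsSSYT.exists_row_threshold (hT : IsSSYT m n P Q T) (r j : ℕ) :
    ∃ c₀ : ℤ, ∀ x ∈ cells m P Q, x.1 = r → (c₀ ≤ x.2 ↔ j < T x) := by
  set S := ((cells m P Q).filter fun x => x.1 = r ∧ j < T x).image Prod.snd
  by_cases hS : S.Nonempty
  · refine ⟨S.min' hS, fun x hx hxr => ⟨fun hle => ?_, fun hj => ?_⟩⟩
    · obtain ⟨y, hy, hyc⟩ := mem_image.1 (S.min'_mem hS)
      rw [mem_filter] at hy
      obtain ⟨y₁, y₂⟩ := y
      obtain ⟨x₁, x₂⟩ := x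
      simp only at hxr hyc hle hy
      subst hxr hyc
      obtain ⟨hy, rfl, hjy⟩ := hy
      exact hjy.trans_le (hT.row_mono hy hx hle)
    · exact S.min'_le _ (mem_image_of_mem _ (mem_filter.2 ⟨hx, hxr, hj⟩))
  · refine ⟨P r + 1, fun x hx hxr => iff_of_false ?_ fun hj => hS ?_⟩
    · subst hxr
      simp only [cells, mem_filter, mem_product, mem_Icc] at hx
      omega
    · exact ⟨_, mem_image_of_mem _ (mem_filter.2 ⟨hx, hxr, hj⟩)⟩

theorem IsSSYT.exists_prefixCount_eq (hT : IsSSYT m n P Q T) (r j : ℕ) :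
    ∃ c₀ : ℤ, prefixCount m P Q T r c₀ (j + 1) = countBeforeRow m P Q T (r + 1) (j + 1) ∧
      prefixCount m P Q T r c₀ j = countBeforeRow m P Q T r j := by
  obtain ⟨c₀, hc₀⟩ := hT.exists_row_threshold r j
  have hcut : ∀ x ∈ cells m P Q,
      (x.1 < r ∨ (x.1 = r ∧ c₀ ≤ x.2)) ↔ (x.1 < r ∨ (x.1 = r ∧ j < T x)) :=
    fun x hx => or_congr_right (and_congr_right (hc₀ x hx))
  refine ⟨c₀, ?_, ?_⟩ <;>
  · refine congrArg card (filter_congr fun x hx => ?_)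
    rw [hcut x hx]
    omega

theorem IsSSYT.prefixCount_le_iff (hT : IsSSYT m n P Q T) (i : ℕ) :
    (∀ (r : ℕ) (c : ℤ), prefixCount m P Q T r c (i + 1) ≤ prefixCount m P Q T r c i) ↔
      ∀ r, countBeforeRow m P Q T (r + 1) (i + 1) ≤ countBeforeRow m P Q T r i := by
  refine ⟨fun h r => ?_, fun h r c => ?_⟩
  · obtain ⟨c₀, h₁, h₀⟩ := hT.exists_prefixCount_eq r i
    exact h₁ ▸ h₀ ▸ h r c₀
  · calc prefixCount m P Q T r c (i + 1)
        ≤ countBeforeRow m P Q T (r + 1) (i + 1) := prefixCount_le_countBeforeRow_succ r c _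
      _ ≤ countBeforeRow m P Q T r i := h r
      _ ≤ prefixCount m P Q T r c i := countBeforeRow_le_prefixCount r c i

/-- Rows beyond `m` are empty, so the inequalities for `r > m` follow from the one for `r = m`. -/
lemma forall_countBeforeRow_succ_le_iff (i : ℕ) :
    (∀ r, countBeforeRow m P Q T (r + 1) (i + 1) ≤ countBeforeRow m P Q T r i) ↔
      ∀ p < m, countBeforeRow m P Q T (p + 2) (i + 1) ≤ countBeforeRow m P Q T (p + 1) i := by
  refine ⟨fun h p _ => h (p + 1), fun h => ?_⟩
  have hle : ∀ r ≤ m, countBeforeRow m P Q T (r + 1) (i + 1) ≤ countBeforeRow m P Q T r i := by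
    rintro (_ | p) hp
    · exact (countBeforeRow_one (i + 1)).trans_le (Nat.zero_le _)
    · exact h p hp
  intro r
  rcases le_or_gt r m with hr | hr
  · exact hle r hr
  · calc countBeforeRow m P Q T (r + 1) (i + 1)
        = countBeforeRow m P Q T (m + 1) (i + 1) := countBeforeRow_of_lt (by omega) _
      _ ≤ countBeforeRow m P Q T m i := hle m le_rfl
      _ ≤ countBeforeRow m P Q T r i := countBeforeRow_mono i hr.le

end

theorem ballot_iff_dstat_nonneg_general
    (m n : ℕ) (P Q : ℕ → ℤ)
    (T : ℕ × ℤ → ℕ) (hT : IsSSYT m n P Q T) :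
    (∀ (r₀ : ℕ) (c₀ : ℤ) (i : ℕ), 1 ≤ i → i < n →
      ((cells m P Q).filter
          (fun x => (x.1 < r₀ ∨ (x.1 = r₀ ∧ c₀ ≤ x.2)) ∧ T x = i + 1)).card
        ≤ ((cells m P Q).filter
          (fun x => (x.1 < r₀ ∨ (x.1 = r₀ ∧ c₀ ≤ x.2)) ∧ T x = i)).card)
    ↔ (∀ k, 1 ≤ k → k < n → ∀ p < m, 0 ≤ dstat (gOf m n P Q T) k p) := by
  have hd : ∀ k, 1 ≤ k → k < n → ∀ p < m, (0 ≤ dstat (gOf m n P Q T) k p ↔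
      countBeforeRow m P Q T (p + 2) (k + 1) ≤ countBeforeRow m P Q T (p + 1) k) :=
    fun k hk1 hkn p hp => by rw [dstat_gOf hk1 hkn hp, sub_nonneg, Nat.cast_le]
  constructor
  · intro hb k hk1 hkn p hp
    rw [hd k hk1 hkn p hp]
    exact (forall_countBeforeRow_succ_le_iff k).1
      ((hT.prefixCount_le_iff k).1 fun r c => hb r c k hk1 hkn) p hp
  · intro hdn r c i hi1 hin
    exact (hT.prefixCount_le_iff i).2 ((forall_countBeforeRow_succ_le_iff i).2 fun p hp =>
      (hd i hi1 hin p hp).1 (hdn i hi1 hin p hp)) r c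

/-- A semistandard `n`-tableau `T` of shape `P/Q` satisfies
the ballot (lattice-word) condition on every initial segment of its reverse
reading word (rows top to bottom, cells right to left; an initial segment is
cut off at a row `r₀` and column threshold `c₀`) if and only if
`d(g(T);k,p) ≥ 0` for every `k ∈ {1,…,n−1}` and `p ∈ {0,…,m−1}`. -/
theorem ballot_iff_dstat_nonneg
    (m n : ℕ) (P Q : ℕ → ℤ) (h : ShapeHyps m n P Q)
    (T : ℕ × ℤ → ℕ) (hT : IsSSYT m n P Q T) :
    (∀ (r₀ : ℕ) (c₀ : ℤ) (i : ℕ), 1 ≤ i → i < n →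
      ((cells m P Q).filter
          (fun x => (x.1 < r₀ ∨ (x.1 = r₀ ∧ c₀ ≤ x.2)) ∧ T x = i + 1)).card
        ≤ ((cells m P Q).filter
          (fun x => (x.1 < r₀ ∨ (x.1 = r₀ ∧ c₀ ≤ x.2)) ∧ T x = i)).card)
    ↔ (∀ k, 1 ≤ k → k < n → ∀ p < m, 0 ≤ dstat (gOf m n P Q T) k p) :=
  ballot_iff_dstat_nonneg_general m n P Q T hT
end

section
/- Adopt the conventions P_r := Q_m for r > m and Q_r := P_1 for r < 1. Define integer arrays M and N on the positions i ∈ {0,…,n}, j ∈ C_i by M_{i,j} := min{Q_{1−j}, P_{1+i−j}} and N_{i,j} := max{Q_{1+i−j}, P_{n+1−j}}. Then M and N are GT n-parallelograms framed by P/Q, and for every GT n-parallelogram x framed by P/Q and every position (i,j) one has N_{i,j} ≤ g_{i,j}(x) ≤ M_{i,j}. In particular, M and N are respectively the unique maximal and unique minimal elements of the set of GT n-parallelograms framed by P/Q under componentwise comparison. -/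
open Finset
open scoped Classical

def IsGT (m n : ℕ) (P Q : ℕ → ℤ) (g : ℕ → ℕ → ℤ) : Prop :=
  (∀ k < m, g 0 k = Q (k + 1)) ∧
  (∀ k < m, g n k = P (k + 1)) ∧
  (∀ i < n, ∀ k < m, g i k ≤ g (i + 1) k) ∧
  (∀ i < n, ∀ k, k + 1 < m → g (i + 1) (k + 1) ≤ g i k) ∧
  (∀ i k, n < i ∨ m ≤ k → g i k = 0)

/-- The array `M` with `M_{i,j} = min{Q_{1−j}, P_{1+i−j}}`, using the
conventions `Q_r := P_1` for `r < 1` (in slot coordinates `κ = i − j`, so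
`1−j = κ+1−i` and `1+i−j = κ+1`); entries outside the valid index range are
normalized to `0`. -/
def Mx (m n : ℕ) (P Q : ℕ → ℤ) : ℕ → ℕ → ℤ := fun i κ =>
  if i ≤ n ∧ κ < m then
    min (if i ≤ κ then Q (κ + 1 - i) else P 1) (P (κ + 1))
  else 0

/-- The array `N` with `N_{i,j} = max{Q_{1+i−j}, P_{n+1−j}}`, using the
conventions `P_r := Q_m` for `r > m` (in slot coordinates `κ = i − j`, so
`1+i−j = κ+1` and `n+1−j = n+1−i+κ`); entries outside the valid index range are
normalized to `0`. -/
def Nx (m n : ℕ) (P Q : ℕ → ℤ) : ℕ → ℕ → ℤ := fun i κ =>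
  if i ≤ n ∧ κ < m then
    max (Q (κ + 1)) (if n + 1 - i + κ ≤ m then P (n + 1 - i + κ) else Q m)
  else 0

lemma anti_lem (m : ℕ) (f : ℕ → ℤ) (hf : ∀ r, 1 ≤ r → r < m → f (r + 1) ≤ f r) :
    ∀ a b, 1 ≤ a → a ≤ b → b ≤ m → f b ≤ f a := by
  intro a b ha hab hbm
  induction b, hab using Nat.le_induction with
  | base => exact le_refl _
  | succ b hb ih =>
      exact (hf b (ha.trans hb) (by omega)).trans (ih (by omega))

lemma key_lem (m n : ℕ) (P Q : ℕ → ℤ)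
    (hP : ∀ r, 1 ≤ r → r < m → P (r + 1) ≤ P r)
    (hQ : ∀ r, 1 ≤ r → r < m → Q (r + 1) ≤ Q r)
    (hcol : ∀ c : ℤ, ((Finset.Icc 1 m).filter (fun r => Q r < c ∧ c ≤ P r)).card ≤ n) :
    ∀ r, 1 ≤ r → r + n ≤ m → P (r + n) ≤ Q r := by
  intro r hr hrm
  by_contra hlt
  push_neg at hlt
  set c : ℤ := Q r + 1 with hc
  have hsub : Finset.Icc r (r + n) ⊆ (Finset.Icc 1 m).filter (fun s => Q s < c ∧ c ≤ P s) := by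
    intro s hs
    simp only [Finset.mem_Icc] at hs
    simp only [Finset.mem_filter, Finset.mem_Icc]
    refine ⟨⟨by omega, by omega⟩, ?_, ?_⟩
    · have : Q s ≤ Q r := anti_lem m Q hQ r s hr hs.1 (by omega)
      omega
    · have : P (r + n) ≤ P s := anti_lem m P hP s (r + n) (by omega) hs.2 hrm
      omega
  have hcard := Finset.card_le_card hsub
  rw [Nat.card_Icc] at hcard
  have := hcol c
  omega

lemma gt_up (m n : ℕ) (P Q : ℕ → ℤ) (x : ℕ → ℕ → ℤ) (hx : IsGT m n P Q x) :
    ∀ d i κ, i + d = n → κ < m → x i κ ≤ P (κ + 1) := by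
  intro d
  induction d with
  | zero => intro i κ hi hκ; rw [Nat.add_zero] at hi; subst hi; exact (hx.2.1 κ hκ).le
  | succ d ih =>
      intro i κ hi hκ
      exact (hx.2.2.1 i (by omega) κ hκ).trans (ih (i + 1) κ (by omega) hκ)

lemma gt_down (m n : ℕ) (P Q : ℕ → ℤ) (x : ℕ → ℕ → ℤ) (hx : IsGT m n P Q x) :
    ∀ i κ, i ≤ n → κ < m → Q (κ + 1) ≤ x i κ := by
  intro i
  induction i with
  | zero => intro κ _ hκ; exact (hx.1 κ hκ).ge
  | succ i ih =>
      intro κ hi hκ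
      exact (ih κ (by omega) hκ).trans (hx.2.2.1 i (by omega) κ hκ)

lemma gt_downleft (m n : ℕ) (P Q : ℕ → ℤ) (x : ℕ → ℕ → ℤ) (hx : IsGT m n P Q x) :
    ∀ i κ, i ≤ n → i ≤ κ → κ < m → x i κ ≤ Q (κ + 1 - i) := by
  intro i
  induction i with
  | zero => intro κ _ _ hκ; exact (hx.1 κ hκ).le
  | succ i ih =>
      intro κ hi hiκ hκ
      have h1 : x (i + 1) κ ≤ x i (κ - 1) := by
        have := hx.2.2.2.1 i (by omega) (κ - 1) (by omega)
        have hr : κ - 1 + 1 = κ := by omega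
        rwa [hr] at this
      have h2 := ih (κ - 1) (by omega) (by omega) (by omega)
      have hr : κ - 1 + 1 - i = κ + 1 - (i + 1) := by omega
      rw [hr] at h2
      exact h1.trans h2

lemma gt_upright (m n : ℕ) (P Q : ℕ → ℤ) (x : ℕ → ℕ → ℤ) (hx : IsGT m n P Q x) :
    ∀ d i κ, i + d = n → d + κ < m → P (d + κ + 1) ≤ x i κ := by
  intro d
  induction d with
  | zero =>
      intro i κ hi hκ
      rw [Nat.add_zero] at hi; subst hi
      simpa using (hx.2.1 κ (by omega)).ge
  | succ d ih =>
      intro i κ hi hκ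
      have h1 : x (i + 1) (κ + 1) ≤ x i κ := hx.2.2.2.1 i (by omega) κ (by omega)
      have h2 := ih (i + 1) (κ + 1) (by omega) (by omega)
      have hr : d + (κ + 1) + 1 = d + 1 + κ + 1 := by omega
      rw [hr] at h2
      exact h2.trans h1

/-- The arrays `M` and `N` are GT `n`-parallelograms framed
by `P/Q`, and every GT `n`-parallelogram framed by `P/Q` lies entrywise between
`N` and `M`; hence `M` and `N` are the unique maximal and minimal elements of
the skew-tabular lattice. -/
theorem max_min_parallelograms
    (m n : ℕ) (P Q : ℕ → ℤ) (h : ShapeHyps m n P Q) :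
    IsGT m n P Q (Mx m n P Q) ∧ IsGT m n P Q (Nx m n P Q) ∧
    ∀ x, IsGT m n P Q x → ∀ i κ,
      Nx m n P Q i κ ≤ x i κ ∧ x i κ ≤ Mx m n P Q i κ := by
  obtain ⟨hn2, hnm, hP, hPm, hQ, hQm, hQP, hcol⟩ := h
  have Pa := anti_lem m P hP
  have Qa := anti_lem m Q hQ
  have key := key_lem m n P Q hP hQ hcol
  refine ⟨⟨?_, ?_, ?_, ?_, ?_⟩, ⟨?_, ?_, ?_, ?_, ?_⟩, ?_⟩
  · -- Mx row 0
    intro k hk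
    simp only [Mx]
    rw [if_pos ⟨Nat.zero_le n, hk⟩, if_pos (Nat.zero_le k)]
    simp only [Nat.sub_zero]
    exact min_eq_left (hQP (k + 1) (by omega) (by omega))
  · -- Mx row n
    intro k hk
    simp only [Mx]
    rw [if_pos ⟨le_refl n, hk⟩]
    by_cases hnk : n ≤ k
    · rw [if_pos hnk]
      have hkey := key (k + 1 - n) (by omega) (by omega)
      have hr : k + 1 - n + n = k + 1 := by omega
      rw [hr] at hkey
      exact min_eq_right hkey
    · rw [if_neg hnk]
      exact min_eq_right (Pa 1 (k + 1) le_rfl (by omega) (by omega))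
  · -- Mx vertical
    intro i hi k hk
    simp only [Mx]
    rw [if_pos (show i ≤ n ∧ k < m from ⟨by omega, hk⟩),
      if_pos (show i + 1 ≤ n ∧ k < m from ⟨by omega, hk⟩)]
    refine min_le_min ?_ le_rfl
    by_cases h1 : i + 1 ≤ k
    · rw [if_pos (by omega : i ≤ k), if_pos h1]
      exact Qa (k + 1 - (i + 1)) (k + 1 - i) (by omega) (by omega) (by omega)
    · by_cases h2 : i ≤ k
      · rw [if_pos h2, if_neg h1]
        have hk1 : k + 1 - i = 1 := by omega
        rw [hk1]
        exact hQP 1 le_rfl (by omega)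
      · rw [if_neg h2, if_neg h1]
  · -- Mx diagonal
    intro i hi k hk
    simp only [Mx]
    rw [if_pos (show i + 1 ≤ n ∧ k + 1 < m from ⟨by omega, by omega⟩),
      if_pos (show i ≤ n ∧ k < m from ⟨by omega, by omega⟩)]
    refine min_le_min ?_ (hP (k + 1) (by omega) (by omega))
    by_cases h2 : i ≤ k
    · rw [if_pos (by omega : i + 1 ≤ k + 1), if_pos h2]
      have hr : k + 1 + 1 - (i + 1) = k + 1 - i := by omega
      rw [hr]
    · rw [if_neg (by omega : ¬ i + 1 ≤ k + 1), if_neg h2]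
  · -- Mx zero
    intro i k hik
    simp only [Mx]
    rw [if_neg (by omega)]
  · -- Nx row 0
    intro k hk
    simp only [Nx]
    rw [if_pos ⟨Nat.zero_le n, hk⟩]
    by_cases hc : n + 1 - 0 + k ≤ m
    · rw [if_pos hc]
      have hkey := key (k + 1) (by omega) (by omega)
      have hr : n + 1 - 0 + k = k + 1 + n := by omega
      rw [hr]
      exact max_eq_left hkey
    · rw [if_neg hc]
      exact max_eq_left (Qa (k + 1) m (by omega) (by omega) le_rfl)
  · -- Nx row n
    intro k hk
    simp only [Nx]
    rw [if_pos ⟨le_refl n, hk⟩]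
    have hr : n + 1 - n + k = k + 1 := by omega
    rw [hr, if_pos (by omega)]
    exact max_eq_right (hQP (k + 1) (by omega) (by omega))
  · -- Nx vertical
    intro i hi k hk
    simp only [Nx]
    rw [if_pos (show i ≤ n ∧ k < m from ⟨by omega, hk⟩),
      if_pos (show i + 1 ≤ n ∧ k < m from ⟨by omega, hk⟩)]
    refine max_le_max le_rfl ?_
    have e1 : n + 1 - (i + 1) + k = n - i + k := by omega
    have e2 : n + 1 - i + k = n - i + k + 1 := by omega
    rw [e1, e2]
    by_cases h1 : n - i + k + 1 ≤ m
    · rw [if_pos h1, if_pos (by omega)]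
      exact hP (n - i + k) (by omega) (by omega)
    · rw [if_neg h1]
      by_cases h2 : n - i + k ≤ m
      · rw [if_pos h2]
        have hm : n - i + k = m := by omega
        rw [hm]
        exact hQP m (by omega) le_rfl
      · rw [if_neg h2]
  · -- Nx diagonal
    intro i hi k hk
    simp only [Nx]
    rw [if_pos (show i + 1 ≤ n ∧ k + 1 < m from ⟨by omega, by omega⟩),
      if_pos (show i ≤ n ∧ k < m from ⟨by omega, by omega⟩)]
    refine max_le_max (hQ (k + 1) (by omega) (by omega)) ?_
    have e : n + 1 - (i + 1) + (k + 1) = n + 1 - i + k := by omega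
    rw [e]
  · -- Nx zero
    intro i k hik
    simp only [Nx]
    rw [if_neg (by omega)]
  · -- bounds
    intro x hx i κ
    by_cases hin : i ≤ n ∧ κ < m
    · constructor
      · simp only [Nx]
        rw [if_pos hin]
        refine max_le (gt_down m n P Q x hx i κ hin.1 hin.2) ?_
        by_cases hc : n + 1 - i + κ ≤ m
        · rw [if_pos hc]
          have hb := gt_upright m n P Q x hx (n - i) i κ (by omega) (by omega)
          have hr : n - i + κ + 1 = n + 1 - i + κ := by omega
          rw [hr] at hb
          exact hb
        · rw [if_neg hc]
          exact (Qa (κ + 1) m (by omega) (by omega) le_rfl).trans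
            (gt_down m n P Q x hx i κ hin.1 hin.2)
      · simp only [Mx]
        rw [if_pos hin]
        refine le_min ?_ (gt_up m n P Q x hx (n - i) i κ (by omega) hin.2)
        by_cases hik : i ≤ κ
        · rw [if_pos hik]
          exact gt_downleft m n P Q x hx i κ hin.1 hik hin.2
        · rw [if_neg hik]
          exact (gt_up m n P Q x hx (n - i) i κ (by omega) hin.2).trans
            (Pa 1 (κ + 1) le_rfl (by omega) (by omega))
    · have hz := hx.2.2.2.2 i κ (by omega)
      refine ⟨?_, ?_⟩ <;> simp only [Mx, Nx] <;> rw [if_neg hin, hz]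
end
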